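/- (Bounded perturbation resilience of the PC-algorithm I.) Let ν ∈ (0,1) and γ ∈ (0,2). Let {v^k} be a bounded sequence in H and {λ_k} nonnegative reals with Σ_{k=0}^∞ λ_k < +∞. Let x^0 ∈ H and let {x^k}, {y^k}, {β_k} satisfy, for every k ≥ 0, with w^k := x^k + λ_k v^k: β_k > 0 with inf_k β_k > 0; y^k = P_C(w^k − β_k F(w^k)); β_k‖F(w^k) − F(y^k)‖ ≤ ν‖w^k − y^k‖; d^k := (w^k − y^k) − β_k(F(w^k) − F(y^k)) ≠ 0; ρ_k := ⟨w^k − y^k, d^k⟩/‖d^k‖²; and x^{k+1} = w^k − γ ρ_k d^k. Then {x^k} converges weakly (i.e., ⟨x^k, u⟩ → ⟨x̂, u⟩ for every u ∈ H) to some point x̂ ∈ SOL(C,F). -/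

import Mathlib

/-!
For a solution `q`, the update `x (k+1) = w k - γ ρ k • d k` is a relaxed projection of `w k` onto
the half-space `{z | ⟪w k - y k, d k⟫ ≤ ⟪w k - z, d k⟫}`, which contains `q` by the projection
inequality and monotonicity. With the step-size rule this gives
`‖x (k+1) - q‖² + c ‖w k - y k‖² ≤ (‖x k - q‖ + λ k M)²`, `c = γ(2-γ)(1-ν)²/(1+ν)² > 0`.
As `∑ λ k < ∞`, every `‖x k - q‖` converges and `∑ ‖w k - y k‖² < ∞`, so `y k - x k → 0`.
Passing to the limit in `⟪F z, z - y k⟫ ≥ -O(‖w k - y k‖)` (for `z ∈ C`) and applying Minty's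
lemma shows that every weak cluster point of `x` solves the variational inequality. Opial's
argument then concludes: bounded sets are weakly compact, and two weak cluster points `q₁, q₂`
coincide because `⟪x k, q₁ - q₂⟫` converges, by polarization.
-/

open RealInnerProductSpace Filter Topology

theorem exists_tendsto_of_le_add_of_summable {a e : ℕ → ℝ} (ha : ∀ k, 0 ≤ a k)
    (he : ∀ k, 0 ≤ e k) (hsum : Summable e) (hrec : ∀ k, a (k + 1) ≤ a k + e k) :
    ∃ l, Tendsto a atTop (𝓝 l) := by
  set S : ℕ → ℝ := fun k => ∑ i ∈ Finset.range k, e i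
  have hanti : Antitone fun k => a k - S k :=
    antitone_nat_of_succ_le fun k => by
      simp only [S, Finset.sum_range_succ]
      linarith [hrec k]
  have hbdd : BddBelow (Set.range fun k => a k - S k) :=
    ⟨-∑' i, e i, Set.forall_mem_range.2 fun k => by
      linarith [ha k, hsum.sum_le_tsum (Finset.range k) fun i _ => he i]⟩
  exact ⟨_, ((tendsto_atTop_ciInf hanti hbdd).add hsum.hasSum.tendsto_sum_nat).congr
    fun k => by ring⟩

theorem le_add_of_sq_add_le {a a' b e : ℝ} (ha' : 0 ≤ a') (hb : 0 ≤ b) (hae : 0 ≤ a + e)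
    (h : a' ^ 2 + b ≤ (a + e) ^ 2) : a' ≤ a + e :=
  (pow_le_pow_iff_left₀ ha' hae two_ne_zero).1 (by linarith)

theorem exists_tendsto_of_sq_add_le {a b e : ℕ → ℝ} (ha : ∀ k, 0 ≤ a k) (hb : ∀ k, 0 ≤ b k)
    (he : ∀ k, 0 ≤ e k) (hsum : Summable e) (hrec : ∀ k, a (k + 1) ^ 2 + b k ≤ (a k + e k) ^ 2) :
    ∃ l, Tendsto a atTop (𝓝 l) :=
  exists_tendsto_of_le_add_of_summable ha he hsum fun k =>
    le_add_of_sq_add_le (ha _) (hb k) (add_nonneg (ha k) (he k)) (hrec k)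

theorem summable_of_sq_add_le {a b e : ℕ → ℝ} (ha : ∀ k, 0 ≤ a k) (hb : ∀ k, 0 ≤ b k)
    (he : ∀ k, 0 ≤ e k) (hsum : Summable e) (hrec : ∀ k, a (k + 1) ^ 2 + b k ≤ (a k + e k) ^ 2) :
    Summable b := by
  obtain ⟨l, hl⟩ := exists_tendsto_of_sq_add_le ha hb he hsum hrec
  obtain ⟨R, hR⟩ := hl.bddAbove_range
  set E := ∑' i, e i
  have hR0 : 0 ≤ R := (ha 0).trans (hR (Set.mem_range_self 0))
  have heE : ∀ k, e k ≤ E := fun k => hsum.le_tsum k fun j _ => he j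
  have hstep : ∀ k, b k ≤ a k ^ 2 - a (k + 1) ^ 2 + (2 * R + E) * e k := fun k => by
    have haR : a k ≤ R := hR (Set.mem_range_self k)
    nlinarith [hrec k, mul_le_mul_of_nonneg_right haR (he k),
      mul_le_mul_of_nonneg_right (heE k) (he k)]
  refine summable_of_sum_range_le (c := a 0 ^ 2 + (2 * R + E) * E) hb fun n => ?_
  calc ∑ k ∈ Finset.range n, b k
      ≤ ∑ k ∈ Finset.range n, (a k ^ 2 - a (k + 1) ^ 2 + (2 * R + E) * e k) :=
        Finset.sum_le_sum fun k _ => hstep k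
    _ = a 0 ^ 2 - a n ^ 2 + (2 * R + E) * ∑ k ∈ Finset.range n, e k := by
        rw [Finset.sum_add_distrib, Finset.sum_range_sub' (fun k => a k ^ 2), Finset.mul_sum]
    _ ≤ a 0 ^ 2 + (2 * R + E) * E := by
        have := hsum.sum_le_tsum (Finset.range n) fun k _ => he k
        have : 0 ≤ 2 * R + E := by linarith [he 0, heE 0]
        nlinarith [sq_nonneg (a n)]

theorem norm_sub_sq_add_le_sq_add {E : Type*} [SeminormedAddCommGroup E] {x x' w q : E} {s e : ℝ}
    (h : ‖x' - q‖ ^ 2 + s ≤ ‖w - q‖ ^ 2) (hwx : ‖w - x‖ ≤ e) :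
    ‖x' - q‖ ^ 2 + s ≤ (‖x - q‖ + e) ^ 2 := by
  have : ‖w - q‖ ≤ ‖x - q‖ + e := by
    linarith [norm_sub_le_norm_sub_add_norm_sub w x q]
  nlinarith [pow_le_pow_left₀ (norm_nonneg _) this 2]

theorem MapClusterPt.eq_of_tendsto {X α : Type*} [TopologicalSpace X] [T2Space X] {l : Filter α}
    {f : α → X} {a b : X} (ha : MapClusterPt a l f) (hb : Tendsto f l (𝓝 b)) : a = b :=
  eq_of_nhds_neBot (ha.clusterPt.mono hb)

theorem MapClusterPt.add_tendsto {X α : Type*} [TopologicalSpace X] [Add X] [ContinuousAdd X]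
    {l : Filter α} {f g : α → X} {a b : X} (ha : MapClusterPt a l f) (hb : Tendsto g l (𝓝 b)) :
    MapClusterPt (a + b) l (f + g) := by
  have : (comap f (𝓝 a) ⊓ l).NeBot := by
    rw [← map_neBot_iff f, Filter.push_pull']
    exact ha
  exact ((tendsto_comap.mono_left inf_le_left).add (hb.mono_left inf_le_right)).mapClusterPt.mono
    inf_le_right

section

variable {H : Type*} [NormedAddCommGroup H] [InnerProductSpace ℝ H]

theorem continuous_inner_toWeakSpace_symm (u : H) :
    Continuous fun w : WeakSpace ℝ H => ⟪u, (toWeakSpace ℝ H).symm w⟫ :=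
  WeakBilin.eval_continuous (topDualPairing ℝ H).flip (innerSL ℝ u)

theorem tendsto_inner_of_tendsto_toWeakSpace {α : Type*} {l : Filter α} {x : α → H} {q : H}
    (h : Tendsto (toWeakSpace ℝ H ∘ x) l (𝓝 (toWeakSpace ℝ H q))) (u : H) :
    Tendsto (fun k => ⟪x k, u⟫) l (𝓝 ⟪q, u⟫) := by
  simpa [Function.comp_def, real_inner_comm u] using
    ((continuous_inner_toWeakSpace_symm u).tendsto _).comp h

theorem mapClusterPt_toWeakSpace_of_tendsto_sub {α : Type*} {l : Filter α} {x y : α → H} {q : H}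
    (hxy : Tendsto (fun k => y k - x k) l (𝓝 0))
    (hq : MapClusterPt (toWeakSpace ℝ H q) l (toWeakSpace ℝ H ∘ x)) :
    MapClusterPt (toWeakSpace ℝ H q) l (toWeakSpace ℝ H ∘ y) := by
  have hxy' : Tendsto (fun k => toWeakSpace ℝ H (y k - x k)) l (𝓝 0) := by
    simpa [Function.comp_def] using ((toWeakSpaceCLM ℝ H).continuous.tendsto 0).comp hxy
  simpa [Function.comp_def, Pi.add_def, ← map_add] using hq.add_tendsto hxy'

/-- Banach–Alaoglu in `WeakDual ℝ H`, carried back to `H` by the Riesz isomorphism. -/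
theorem isCompact_toWeakSpace_closedBall [CompleteSpace H] (r : ℝ) :
    IsCompact (toWeakSpace ℝ H '' Metric.closedBall 0 r) := by
  set T := InnerProductSpace.toDual ℝ H
  have hT : ∀ (φ : StrongDual ℝ H) (z : H), φ z = ⟪T.symm φ, z⟫ := fun φ z => by
    rw [← InnerProductSpace.toDual_apply_apply (𝕜 := ℝ), LinearIsometryEquiv.apply_symm_apply]
  have hcont : Continuous fun c : WeakDual ℝ H => toWeakSpace ℝ H (T.symm c.toStrongDual) := by
    refine WeakBilin.continuous_of_continuous_eval _ fun ℓ => ?_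
    have h : ∀ c : WeakDual ℝ H, ℓ (T.symm c.toStrongDual) = c (T.symm ℓ) := fun c => by
      rw [hT, real_inner_comm, ← hT]; rfl
    exact (WeakDual.eval_continuous (𝕜 := ℝ) (E := H) (T.symm ℓ)).congr fun c => (h c).symm
  convert (WeakDual.isCompact_closedBall (𝕜 := ℝ) (0 : StrongDual ℝ H) r).image hcont
  ext w
  simp only [Set.mem_image, Metric.mem_closedBall, dist_zero_right, Set.mem_preimage]
  constructor
  · rintro ⟨z, hz, rfl⟩
    exact ⟨StrongDual.toWeakDual (T z), by simpa using hz, by simp⟩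
  · rintro ⟨c, hc, rfl⟩
    exact ⟨_, by simpa using hc, rfl⟩

theorem eq_of_mapClusterPt_toWeakSpace {x : ℕ → H} {q₁ q₂ : H} {l₁ l₂ : ℝ}
    (h₁ : Tendsto (fun k => ‖x k - q₁‖) atTop (𝓝 l₁))
    (h₂ : Tendsto (fun k => ‖x k - q₂‖) atTop (𝓝 l₂))
    (hc₁ : MapClusterPt (toWeakSpace ℝ H q₁) atTop (toWeakSpace ℝ H ∘ x))
    (hc₂ : MapClusterPt (toWeakSpace ℝ H q₂) atTop (toWeakSpace ℝ H ∘ x)) : q₁ = q₂ := by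
  set u := q₁ - q₂
  have hpolar : ∀ z : H, ⟪u, z⟫ = (‖z - q₂‖ ^ 2 - ‖z - q₁‖ ^ 2 + ‖q₁‖ ^ 2 - ‖q₂‖ ^ 2) / 2 := by
    intro z
    rw [norm_sub_sq_real, norm_sub_sq_real, inner_sub_left, real_inner_comm q₁, real_inner_comm q₂]
    ring
  have hlim : Tendsto (fun k => ⟪u, x k⟫) atTop
      (𝓝 ((l₂ ^ 2 - l₁ ^ 2 + ‖q₁‖ ^ 2 - ‖q₂‖ ^ 2) / 2)) := by
    simp only [hpolar]
    exact ((((h₂.pow 2).sub (h₁.pow 2)).add_const _).sub_const _).div_const 2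
  have hval : ∀ q, MapClusterPt (toWeakSpace ℝ H q) atTop (toWeakSpace ℝ H ∘ x) →
      ⟪u, q⟫ = (l₂ ^ 2 - l₁ ^ 2 + ‖q₁‖ ^ 2 - ‖q₂‖ ^ 2) / 2 := fun q hq =>
    (hq.continuousAt_comp (continuous_inner_toWeakSpace_symm u).continuousAt).eq_of_tendsto hlim
  have hu : ⟪u, u⟫ = 0 := by
    rw [inner_sub_right, hval q₁ hc₁, hval q₂ hc₂, sub_self]
  exact sub_eq_zero.1 (inner_self_eq_zero.1 hu)

theorem exists_mem_tendsto_toWeakSpace_of_tendsto_norm_sub [CompleteSpace H] {x : ℕ → H}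
    {S : Set H} (hS : S.Nonempty)
    (hdist : ∀ q ∈ S, ∃ l, Tendsto (fun k => ‖x k - q‖) atTop (𝓝 l))
    (hclust : ∀ q, MapClusterPt (toWeakSpace ℝ H q) atTop (toWeakSpace ℝ H ∘ x) → q ∈ S) :
    ∃ q ∈ S, Tendsto (toWeakSpace ℝ H ∘ x) atTop (𝓝 (toWeakSpace ℝ H q)) := by
  obtain ⟨p, hp⟩ := hS
  obtain ⟨R, hR⟩ := (hdist p hp).choose_spec.bddAbove_range
  have hmem : ∀ k, (toWeakSpace ℝ H ∘ x) k ∈ toWeakSpace ℝ H '' Metric.closedBall 0 (R + ‖p‖) :=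
    fun k => Set.mem_image_of_mem _ <| mem_closedBall_zero_iff.2 <| by
      linarith [norm_sub_norm_le (x k) p, hR (Set.mem_range_self k)]
  have hK := isCompact_toWeakSpace_closedBall (H := H) (R + ‖p‖)
  obtain ⟨c, -, hc⟩ := hK.exists_mapClusterPt (f := atTop)
    (le_principal_iff.2 (mem_map.2 (Eventually.of_forall hmem)))
  obtain ⟨q, rfl⟩ := (toWeakSpace ℝ H).surjective c
  have hq := hclust q hc
  refine ⟨q, hq, hK.tendsto_nhds_of_unique_mapClusterPt (Eventually.of_forall hmem) ?_⟩
  rintro c' - hc'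
  obtain ⟨q', rfl⟩ := (toWeakSpace ℝ H).surjective c'
  obtain ⟨l, hl⟩ := hdist q hq
  obtain ⟨l', hl'⟩ := hdist q' (hclust q' hc')
  rw [eq_of_mapClusterPt_toWeakSpace hl' hl hc' hc]

def solVI (C : Set H) (F : H → H) : Set H :=
  {p | p ∈ C ∧ ∀ z ∈ C, 0 ≤ ⟪F p, z - p⟫}

theorem mem_solVI_of_forall_inner_nonneg {C : Set H} (hC : Convex ℝ C) {F : H → H}
    (hF : Continuous F) {q : H} (hq : q ∈ C) (h : ∀ z ∈ C, 0 ≤ ⟪F z, z - q⟫) :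
    q ∈ solVI C F := by
  refine ⟨hq, fun z hz => ?_⟩
  have hseg : ∀ t ∈ Set.Ioo (0 : ℝ) 1, 0 ≤ ⟪F (q + t • (z - q)), z - q⟫ := fun t ht => by
    have := h _ (hC.add_smul_sub_mem hq hz ⟨ht.1.le, ht.2.le⟩)
    rw [add_sub_cancel_left, real_inner_smul_right] at this
    exact nonneg_of_mul_nonneg_right this ht.1
  have hlim : Tendsto (fun t : ℝ => ⟪F (q + t • (z - q)), z - q⟫) (𝓝[>] 0) (𝓝 ⟪F q, z - q⟫) := by
    have hcont : Continuous fun t : ℝ => ⟪F (q + t • (z - q)), z - q⟫ := by fun_prop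
    simpa using hcont.continuousWithinAt.tendsto (x := 0) (s := Set.Ioi 0)
  exact ge_of_tendsto hlim (eventually_of_mem (Ioo_mem_nhdsGT one_pos) hseg)

theorem norm_sub_smul_sq_add_le {a d : H} {φ γ : ℝ} (hγ : 0 ≤ γ) (hφ : 0 ≤ φ)
    (had : φ ≤ ⟪a, d⟫) :
    ‖a - (γ * (φ / ‖d‖ ^ 2)) • d‖ ^ 2 + γ * (2 - γ) * (φ ^ 2 / ‖d‖ ^ 2) ≤ ‖a‖ ^ 2 := by
  rcases eq_or_ne d 0 with rfl | hd
  · simp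
  have hρ : 0 ≤ γ * (φ / ‖d‖ ^ 2) := by positivity
  rw [norm_sub_sq_real, real_inner_smul_right, norm_smul, Real.norm_eq_abs, mul_pow, sq_abs]
  have hsq : (γ * (φ / ‖d‖ ^ 2)) ^ 2 * ‖d‖ ^ 2 = γ * (φ / ‖d‖ ^ 2) * (γ * φ) := by
    field_simp
  have hsl : γ * (2 - γ) * (φ ^ 2 / ‖d‖ ^ 2) = γ * (φ / ‖d‖ ^ 2) * ((2 - γ) * φ) := by
    field_simp
  rw [hsq, hsl]
  nlinarith [mul_le_mul_of_nonneg_left had hρ]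

section PCStep

variable {F : H → H} {w y q : H} {β ν : ℝ}

theorem one_sub_mul_sq_le_inner_sub_smul (hβ : 0 ≤ β) (hstep : β * ‖F w - F y‖ ≤ ν * ‖w - y‖) :
    (1 - ν) * ‖w - y‖ ^ 2 ≤ ⟪w - y, (w - y) - β • (F w - F y)⟫ := by
  rw [inner_sub_right, real_inner_smul_right, real_inner_self_eq_norm_sq]
  nlinarith [mul_le_mul_of_nonneg_left (real_inner_le_norm (w - y) (F w - F y)) hβ,
    mul_le_mul_of_nonneg_left hstep (norm_nonneg (w - y))]

theorem norm_sub_smul_le (hβ : 0 ≤ β) (hstep : β * ‖F w - F y‖ ≤ ν * ‖w - y‖) :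
    ‖(w - y) - β • (F w - F y)‖ ≤ (1 + ν) * ‖w - y‖ := by
  calc ‖(w - y) - β • (F w - F y)‖ ≤ ‖w - y‖ + β * ‖F w - F y‖ := by
        simpa [norm_smul, abs_of_nonneg hβ] using norm_sub_le (w - y) (β • (F w - F y))
    _ ≤ (1 + ν) * ‖w - y‖ := by linarith

theorem inner_sub_smul_nonneg (hβ : 0 ≤ β) (hproj : ⟪(w - β • F w) - y, q - y⟫ ≤ 0)
    (hmono : 0 ≤ ⟪F y - F q, y - q⟫) (hsol : 0 ≤ ⟪F q, y - q⟫) :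
    0 ≤ ⟪y - q, (w - y) - β • (F w - F y)⟫ := by
  have hsplit : (w - y) - β • (F w - F y) = ((w - β • F w) - y) + β • F y := by module
  have hFy : ⟪y - q, F y⟫ = ⟪F y - F q, y - q⟫ + ⟪F q, y - q⟫ := by
    rw [inner_sub_left (F y) (F q), sub_add_cancel, real_inner_comm]
  have hproj' : ⟪y - q, (w - β • F w) - y⟫ = -⟪(w - β • F w) - y, q - y⟫ := by
    rw [real_inner_comm, ← inner_neg_right, neg_sub]
  rw [hsplit, inner_add_right, real_inner_smul_right, hproj', hFy]
  nlinarith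

theorem neg_mul_le_inner_sub (hβ : 0 < β) {L : ℝ} {z : H}
    (hproj : ⟪(w - β • F w) - y, z - y⟫ ≤ 0) (hmono : 0 ≤ ⟪F z - F y, z - y⟫)
    (hlip : ‖F w - F y‖ ≤ L * ‖w - y‖) :
    -((β⁻¹ + L) * (‖w - y‖ * ‖z - y‖)) ≤ ⟪F z, z - y⟫ := by
  have hFw : ⟪w - y, z - y⟫ ≤ β * ⟪F w, z - y⟫ := by
    rw [sub_right_comm, inner_sub_left, real_inner_smul_left] at hproj
    linarith
  have hFwy : ⟪F w - F y, z - y⟫ ≤ L * (‖w - y‖ * ‖z - y‖) := by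
    rw [← mul_assoc]
    exact (real_inner_le_norm _ _).trans (mul_le_mul_of_nonneg_right hlip (norm_nonneg _))
  have hwy : -(‖w - y‖ * ‖z - y‖) ≤ ⟪w - y, z - y⟫ :=
    neg_le_of_abs_le (abs_real_inner_le_norm _ _)
  have hinv : -(β⁻¹ * (‖w - y‖ * ‖z - y‖)) ≤ ⟪F w, z - y⟫ := by
    calc -(β⁻¹ * (‖w - y‖ * ‖z - y‖)) = β⁻¹ * -(‖w - y‖ * ‖z - y‖) := by ring
      _ ≤ β⁻¹ * (β * ⟪F w, z - y⟫) := mul_le_mul_of_nonneg_left (by linarith) (inv_nonneg.2 hβ.le)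
      _ = ⟪F w, z - y⟫ := by field_simp
  rw [inner_sub_left] at hmono hFwy
  linarith

theorem norm_pcStep_sub_sq_add_le {d : H} {γ : ℝ} (hβ : 0 ≤ β) (hν : 0 ≤ ν) (hν1 : ν < 1)
    (hγ : 0 ≤ γ) (hγ2 : γ ≤ 2)
    (hproj : ⟪(w - β • F w) - y, q - y⟫ ≤ 0) (hmono : 0 ≤ ⟪F y - F q, y - q⟫)
    (hsol : 0 ≤ ⟪F q, y - q⟫) (hstep : β * ‖F w - F y‖ ≤ ν * ‖w - y‖)
    (hd : d = (w - y) - β • (F w - F y)) (hd0 : d ≠ 0) :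
    ‖(w - (γ * (⟪w - y, d⟫ / ‖d‖ ^ 2)) • d) - q‖ ^ 2
      + γ * (2 - γ) * ((1 - ν) / (1 + ν)) ^ 2 * ‖w - y‖ ^ 2 ≤ ‖w - q‖ ^ 2 := by
  subst hd
  set d := (w - y) - β • (F w - F y)
  set φ := ⟪w - y, d⟫
  have hφ : (1 - ν) * ‖w - y‖ ^ 2 ≤ φ := one_sub_mul_sq_le_inner_sub_smul hβ hstep
  have hdle : ‖d‖ ≤ (1 + ν) * ‖w - y‖ := norm_sub_smul_le hβ hstep
  have hφq : φ ≤ ⟪w - q, d⟫ := by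
    have := inner_sub_smul_nonneg hβ hproj hmono hsol
    rw [show w - q = (w - y) + (y - q) by abel, inner_add_left]
    linarith
  have hdpos : 0 < ‖d‖ := norm_pos_iff.2 hd0
  have hslack : (1 - ν) / (1 + ν) * ‖w - y‖ ≤ φ / ‖d‖ := by
    have hwy : 0 < ‖w - y‖ := by nlinarith
    rw [div_mul_eq_mul_div, div_le_div_iff₀ (by linarith) hdpos]
    nlinarith [mul_le_mul_of_nonneg_left hdle (by linarith : (0 : ℝ) ≤ 1 - ν)]
  have hslack2 : ((1 - ν) / (1 + ν)) ^ 2 * ‖w - y‖ ^ 2 ≤ φ ^ 2 / ‖d‖ ^ 2 := by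
    rw [← mul_pow, ← div_pow]
    exact pow_le_pow_left₀ (by positivity) hslack 2
  have hmain := norm_sub_smul_sq_add_le (a := w - q) (d := d) hγ (by nlinarith) hφq
  rw [sub_right_comm]
  nlinarith [mul_le_mul_of_nonneg_left hslack2 (by nlinarith : (0 : ℝ) ≤ γ * (2 - γ))]

end PCStep

theorem mem_solVI_of_mapClusterPt {C : Set H} (hCcl : IsClosed C) (hCcv : Convex ℝ C)
    {F : H → H} {L : ℝ} (hL : 0 ≤ L) (hmono : ∀ u v, 0 ≤ ⟪F u - F v, u - v⟫)
    (hlip : ∀ u v, ‖F u - F v‖ ≤ L * ‖u - v‖) {w y : ℕ → H} {β : ℕ → ℝ} {b R : ℝ}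
    (hb : 0 < b) (hβ : ∀ k, b ≤ β k) (hyC : ∀ k, y k ∈ C)
    (hproj : ∀ k, ∀ z ∈ C, ⟪(w k - β k • F (w k)) - y k, z - y k⟫ ≤ 0)
    (hyR : ∀ k, ‖y k‖ ≤ R) (hwy : Tendsto (fun k => ‖w k - y k‖) atTop (𝓝 0)) {q : H}
    (hq : MapClusterPt (toWeakSpace ℝ H q) atTop (toWeakSpace ℝ H ∘ y)) : q ∈ solVI C F := by
  have hqC : q ∈ C := by
    have hclosed : IsClosed (toWeakSpace ℝ H '' C) := by
      rw [← closure_eq_iff_isClosed, ← hCcv.toWeakSpace_closure ℝ, hCcl.closure_eq]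
    obtain ⟨q', hq', hqq'⟩ := hclosed.mem_of_mapClusterPt hq
      (Eventually.of_forall fun k => Set.mem_image_of_mem _ (hyC k))
    exact (toWeakSpace ℝ H).injective hqq' ▸ hq'
  have hF : Continuous F :=
    (LipschitzWith.of_dist_le_mul (K := L.toNNReal) fun u v => by
      rw [Real.coe_toNNReal L hL, dist_eq_norm, dist_eq_norm]
      exact hlip u v).continuous
  refine mem_solVI_of_forall_inner_nonneg hCcv hF hqC fun z hz => ?_
  set ε : ℕ → ℝ := fun k => (b⁻¹ + L) * (‖w k - y k‖ * (‖z‖ + R))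
  have hε : Tendsto ε atTop (𝓝 0) := by
    simpa using (hwy.mul_const (‖z‖ + R)).const_mul (b⁻¹ + L)
  have hbound : ∀ k, 0 ≤ ⟪F z, z⟫ - ⟪F z, y k⟫ + ε k := fun k => by
    have hzy : ‖z - y k‖ ≤ ‖z‖ + R := (norm_sub_le _ _).trans (by linarith [hyR k])
    have hεk : (β k)⁻¹ + L ≤ b⁻¹ + L := by linarith [inv_anti₀ hb (hβ k)]
    have hlow := neg_mul_le_inner_sub (hb.trans_le (hβ k)) (hproj k z hz) (hmono z (y k))
      (hlip (w k) (y k))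
    have hlow_ε : ((β k)⁻¹ + L) * (‖w k - y k‖ * ‖z - y k‖) ≤ ε k := by
      show _ ≤ (b⁻¹ + L) * (‖w k - y k‖ * (‖z‖ + R))
      gcongr
    rw [inner_sub_right] at hlow
    linarith
  have hcl := (hq.continuousAt_comp ((continuous_const (y := ⟪F z, z⟫)).sub
    (continuous_inner_toWeakSpace_symm (F z))).continuousAt).add_tendsto hε
  simpa [inner_sub_right] using isClosed_Ici.mem_of_mapClusterPt hcl (Eventually.of_forall hbound)

end

theorem stmt_10_general {H : Type*} [NormedAddCommGroup H] [InnerProductSpace ℝ H]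
    [CompleteSpace H]
    (C : Set H) (hCcl : IsClosed C) (hCcv : Convex ℝ C)
    (P : H → H) (hPmem : ∀ u : H, P u ∈ C)
    (hPchar : ∀ u : H, ∀ c ∈ C, ⟪u - P u, c - P u⟫ ≤ 0)
    (F : H → H) (hmono : ∀ u v : H, 0 ≤ ⟪F u - F v, u - v⟫)
    (L : ℝ) (hL : 0 < L) (hLip : ∀ u v : H, ‖F u - F v‖ ≤ L * ‖u - v‖)
    (hSOL : ∃ p ∈ C, ∀ z ∈ C, 0 ≤ ⟪F p, z - p⟫)
    (ν γ : ℝ) (hν : ν ∈ Set.Ioo (0 : ℝ) 1) (hγ : γ ∈ Set.Ioo (0 : ℝ) 2)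
    (v : ℕ → H) (hv : ∃ M : ℝ, ∀ k, ‖v k‖ ≤ M)
    (lam : ℕ → ℝ) (hlam : ∀ k, 0 ≤ lam k) (hlamsum : Summable lam)
    (x y w : ℕ → H) (β : ℕ → ℝ) (d : ℕ → H) (ρ : ℕ → ℝ)
    (hw : ∀ k, w k = x k + lam k • v k)
    (hβpos : ∀ k, 0 < β k) (hβinf : ∃ b > (0 : ℝ), ∀ k, b ≤ β k)
    (hy : ∀ k, y k = P (w k - β k • F (w k)))
    (hstep : ∀ k, β k * ‖F (w k) - F (y k)‖ ≤ ν * ‖w k - y k‖)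
    (hd : ∀ k, d k = (w k - y k) - β k • (F (w k) - F (y k)))
    (hdne : ∀ k, d k ≠ 0)
    (hρ : ∀ k, ρ k = ⟪w k - y k, d k⟫ / ‖d k‖ ^ 2)
    (hx : ∀ k, x (k + 1) = w k - (γ * ρ k) • d k) :
    ∃ xhat, (xhat ∈ C ∧ ∀ z ∈ C, 0 ≤ ⟪F xhat, z - xhat⟫) ∧
      ∀ u : H, Filter.Tendsto (fun k => ⟪x k, u⟫) Filter.atTop (nhds ⟪xhat, u⟫) := by
  obtain ⟨M, hM⟩ := hv
  obtain ⟨b, hb, hbβ⟩ := hβinf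
  obtain ⟨p, hp⟩ := hSOL
  have hyC : ∀ k, y k ∈ C := fun k => hy k ▸ hPmem _
  have hproj : ∀ k, ∀ z ∈ C, ⟪(w k - β k • F (w k)) - y k, z - y k⟫ ≤ 0 :=
    fun k => hy k ▸ hPchar _
  have hwx : ∀ k, ‖w k - x k‖ ≤ lam k * M := fun k => by
    rw [hw k, add_sub_cancel_left, norm_smul, Real.norm_of_nonneg (hlam k)]
    exact mul_le_mul_of_nonneg_left (hM k) (hlam k)
  have he : ∀ k, 0 ≤ lam k * M := fun k => mul_nonneg (hlam k) ((norm_nonneg _).trans (hM k))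
  set c := γ * (2 - γ) * ((1 - ν) / (1 + ν)) ^ 2
  have hc : 0 < c := mul_pos (mul_pos hγ.1 (by linarith [hγ.2]))
    (pow_pos (div_pos (by linarith [hν.2]) (by linarith [hν.1])) 2)
  have hslack : ∀ k, 0 ≤ c * ‖w k - y k‖ ^ 2 := fun k => by positivity
  have hfejer : ∀ q ∈ solVI C F, ∀ k,
      ‖x (k + 1) - q‖ ^ 2 + c * ‖w k - y k‖ ^ 2 ≤ (‖x k - q‖ + lam k * M) ^ 2 := by
    rintro q ⟨hqC, hq⟩ k
    rw [hx k, hρ k]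
    exact norm_sub_sq_add_le_sq_add (norm_pcStep_sub_sq_add_le (hβpos k).le hν.1.le hν.2
      hγ.1.le hγ.2.le (hproj k q hqC) (hmono _ _) (hq _ (hyC k)) (hstep k) (hd k) (hdne k)) (hwx k)
  have hdist : ∀ q ∈ solVI C F, ∃ l, Tendsto (fun k => ‖x k - q‖) atTop (𝓝 l) := fun q hq =>
    exists_tendsto_of_sq_add_le (fun _ => norm_nonneg _) hslack he (hlamsum.mul_right M)
      (hfejer q hq)
  have hwy : Tendsto (fun k => ‖w k - y k‖) atTop (𝓝 0) := by
    have := summable_of_sq_add_le (a := fun k => ‖x k - p‖) (fun _ => norm_nonneg _) hslack he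
      (hlamsum.mul_right M) (hfejer p hp)
    simpa using ((summable_mul_left_iff hc.ne').1 this).tendsto_atTop_zero.sqrt
  have hyx : Tendsto (fun k => y k - x k) atTop (𝓝 0) := by
    refine squeeze_zero_norm (fun k => ?_)
      (by simpa using hwy.add (hlamsum.mul_right M).tendsto_atTop_zero)
    linarith [norm_sub_le_norm_sub_add_norm_sub (y k) (w k) (x k), norm_sub_rev (y k) (w k), hwx k]
  obtain ⟨R, hR⟩ := (hyx.norm.add (hdist p hp).choose_spec).bddAbove_range
  have hyR : ∀ k, ‖y k‖ ≤ R + ‖p‖ := fun k => by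
    linarith [norm_sub_le_norm_sub_add_norm_sub (y k) (x k) p, norm_sub_norm_le (y k) p,
      hR (Set.mem_range_self k)]
  obtain ⟨q, hq, hlim⟩ := exists_mem_tendsto_toWeakSpace_of_tendsto_norm_sub ⟨p, hp⟩ hdist
    fun q hq => mem_solVI_of_mapClusterPt hCcl hCcv hL.le hmono hLip hb hbβ hyC hproj hyR hwy
      (mapClusterPt_toWeakSpace_of_tendsto_sub hyx hq)
  exact ⟨q, hq, tendsto_inner_of_tendsto_toWeakSpace hlim⟩

theorem stmt_10 {H : Type*} [NormedAddCommGroup H] [InnerProductSpace ℝ H]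
    [CompleteSpace H]
    (C : Set H) (hCne : C.Nonempty) (hCcl : IsClosed C) (hCcv : Convex ℝ C)
    (P : H → H) (hPmem : ∀ u : H, P u ∈ C)
    (hPchar : ∀ u : H, ∀ c ∈ C, ⟪u - P u, c - P u⟫ ≤ 0)
    (F : H → H) (hmono : ∀ u v : H, 0 ≤ ⟪F u - F v, u - v⟫)
    (L : ℝ) (hL : 0 < L) (hLip : ∀ u v : H, ‖F u - F v‖ ≤ L * ‖u - v‖)
    (hSOL : ∃ p ∈ C, ∀ z ∈ C, 0 ≤ ⟪F p, z - p⟫)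
    (ν γ : ℝ) (hν : ν ∈ Set.Ioo (0 : ℝ) 1) (hγ : γ ∈ Set.Ioo (0 : ℝ) 2)
    (v : ℕ → H) (hv : ∃ M : ℝ, ∀ k, ‖v k‖ ≤ M)
    (lam : ℕ → ℝ) (hlam : ∀ k, 0 ≤ lam k) (hlamsum : Summable lam)
    (x y w : ℕ → H) (β : ℕ → ℝ) (d : ℕ → H) (ρ : ℕ → ℝ)
    (hw : ∀ k, w k = x k + lam k • v k)
    (hβpos : ∀ k, 0 < β k) (hβinf : ∃ b > (0 : ℝ), ∀ k, b ≤ β k)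
    (hy : ∀ k, y k = P (w k - β k • F (w k)))
    (hstep : ∀ k, β k * ‖F (w k) - F (y k)‖ ≤ ν * ‖w k - y k‖)
    (hd : ∀ k, d k = (w k - y k) - β k • (F (w k) - F (y k)))
    (hdne : ∀ k, d k ≠ 0)
    (hρ : ∀ k, ρ k = ⟪w k - y k, d k⟫ / ‖d k‖ ^ 2)
    (hx : ∀ k, x (k + 1) = w k - (γ * ρ k) • d k) :
    ∃ xhat, (xhat ∈ C ∧ ∀ z ∈ C, 0 ≤ ⟪F xhat, z - xhat⟫) ∧
      ∀ u : H, Filter.Tendsto (fun k => ⟪x k, u⟫) Filter.atTop (nhds ⟪xhat, u⟫) :=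
  stmt_10_general C hCcl hCcv P hPmem hPchar F hmono L hL hLip hSOL ν γ hν hγ v hv lam hlam hlamsum
    x y w β d ρ hw hβpos hβinf hy hstep hd hdne hρ hx
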